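/- Let K be Stonian and suppose the Boolean algebra B of idempotents in C(K) is a Bade-complete Boolean algebra of projections on a Banach C(K)-module X. Then X is a Kaplansky module. -/

import Mathlib

open Filter Topology

/-- The Boolean algebra of idempotents of `C(K)` is Bade complete on `X`: for every
nonempty upward-directed set of idempotents with supremum an idempotent `E`, the net
`m e x` converges in norm to `m E x` for every `x`. -/
def BadeComplete {K X : Type*} [TopologicalSpace K] [CompactSpace K] [T2Space K]
    [NormedAddCommGroup X] [NormedSpace ℝ X] [CompleteSpace X]
    (m : C(K, ℝ) →ₐ[ℝ] (X →L[ℝ] X)) : Prop :=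
  ∀ S : Set C(K, ℝ), (∀ e ∈ S, e * e = e) → S.Nonempty → DirectedOn (· ≤ ·) S →
    ∀ E : C(K, ℝ), E * E = E → IsLUB S E →
      ∀ x : X, Filter.Tendsto (fun e : S => m (e : C(K, ℝ)) x) Filter.atTop (nhds (m E x))

/-- Kaplansky condition (2). -/
def IsKaplansky {K X : Type*} [TopologicalSpace K] [CompactSpace K] [T2Space K]
    [NormedAddCommGroup X] [NormedSpace ℝ X] [CompleteSpace X]
    (m : C(K, ℝ) →ₐ[ℝ] (X →L[ℝ] X)) : Prop :=
  ∀ (x : X) (A : Set C(K, ℝ)), (∀ a ∈ A, 0 ≤ a) → A.Nonempty → BddAbove A →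
    ∀ b : C(K, ℝ), IsLUB A b → (∀ a ∈ A, m a x = 0) → m b x = 0

/-!
Fix `x` and `ε > 0`. On the closure `W_a` of `{ε < a}`, which is clopen because `K` is Stonian,
`a ≥ ε`, so `χ_{W_a}` is a multiple of `a` and kills `x`. The closure `U` of `⋃_{a ∈ A} {ε < a}`
is clopen; the clopen subsets of `U` killing `x` form an upward-directed family whose indicators
have supremum `χ_U` in `C(K)`, so Bade completeness gives `m χ_U x = 0`. Off `U` every `a ∈ A`,
hence also `b = sup A`, is at most `ε`; thus `‖m b x‖ = ‖m (b - b χ_U) x‖ ≤ ε ‖x‖`.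
-/

namespace TopologicalSpace.Clopens

variable {K : Type*} [TopologicalSpace K]

noncomputable def charFn (W : Clopens K) : C(K, ℝ) :=
  (LocallyConstant.charFn ℝ W.isClopen).toContinuousMap

lemma charFn_apply (W : Clopens K) (t : K) : W.charFn t = (W : Set K).indicator 1 t := rfl

lemma charFn_of_mem {W : Clopens K} {t : K} (ht : t ∈ W) : W.charFn t = 1 :=
  Set.indicator_of_mem ht 1

lemma charFn_of_notMem {W : Clopens K} {t : K} (ht : t ∉ W) : W.charFn t = 0 :=
  Set.indicator_of_notMem ht 1

@[simp] lemma charFn_bot : (⊥ : Clopens K).charFn = 0 := by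
  ext t; exact charFn_of_notMem (Set.notMem_empty t)

lemma charFn_mul (W W' : Clopens K) : W.charFn * W'.charFn = (W ⊓ W').charFn := by
  ext t; simp [charFn_apply, Set.inter_indicator_one]

lemma isIdempotentElem_charFn (W : Clopens K) : IsIdempotentElem W.charFn := by
  rw [IsIdempotentElem, charFn_mul, inf_idem]

lemma charFn_sup (W W' : Clopens K) :
    (W ⊔ W').charFn = W.charFn + W'.charFn - W.charFn * W'.charFn := by
  ext t
  rw [charFn_mul]
  simp only [ContinuousMap.sub_apply, ContinuousMap.add_apply, charFn_apply, coe_sup, coe_inf]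
  rw [eq_sub_iff_add_eq, Set.indicator_union_add_inter_apply]

lemma charFn_mono : Monotone (charFn : Clopens K → C(K, ℝ)) := fun _ _ h t =>
  Set.indicator_le_indicator_of_subset h (fun _ => zero_le_one) t

end TopologicalSpace.Clopens

open TopologicalSpace

def ExtremallyDisconnected.closureClopens {K : Type*} [TopologicalSpace K]
    [ExtremallyDisconnected K] (V : Set K) (hV : IsOpen V) : Clopens K :=
  ⟨closure V, isClosed_closure, ExtremallyDisconnected.open_closure V hV⟩

lemma exists_mul_eq_charFn {K : Type*} [TopologicalSpace K] {W : Clopens K} {a : C(K, ℝ)}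
    {ε : ℝ} (hε : 0 < ε) (haW : ∀ t ∈ W, ε ≤ a t) : ∃ g : C(K, ℝ), g * a = W.charFn := by
  have hpos : ∀ t, 0 < max (a t) ε := fun t => hε.trans_le (le_max_right _ _)
  refine ⟨W.charFn * ⟨fun t => (max (a t) ε)⁻¹,
    (a.continuous.max continuous_const).inv₀ fun t => (hpos t).ne'⟩, ?_⟩
  ext t
  by_cases ht : t ∈ W
  · have hmax : max (a t) ε = a t := max_eq_left (haW t ht)
    simp [Clopens.charFn_of_mem ht, hmax, inv_mul_cancel₀ (hmax ▸ (hpos t).ne')]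
  · simp [Clopens.charFn_of_notMem ht]

lemma IsLUB.apply_le_of_forall_notMem {K : Type*} [TopologicalSpace K] {A : Set C(K, ℝ)}
    {b : C(K, ℝ)} (hb : IsLUB A b) (U : Clopens K) {ε : ℝ} (hA : ∀ a ∈ A, ∀ t ∉ U, a t ≤ ε) :
    ∀ t ∉ U, b t ≤ ε := by
  have hbound : b ≤ b * U.charFn + ε • (1 - U.charFn) := hb.2 fun a ha s => by
    by_cases hs : s ∈ U
    · simpa [Clopens.charFn_of_mem hs] using hb.1 ha s
    · simpa [Clopens.charFn_of_notMem hs] using hA a ha s hs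
  intro t ht
  simpa [Clopens.charFn_of_notMem ht] using hbound t

lemma norm_sub_mul_charFn_le {K : Type*} [TopologicalSpace K] [CompactSpace K] {b : C(K, ℝ)}
    (hb : 0 ≤ b) (U : Clopens K) {ε : ℝ} (hε : 0 ≤ ε) (hbU : ∀ t ∉ U, b t ≤ ε) :
    ‖b - b * U.charFn‖ ≤ ε := by
  refine (ContinuousMap.norm_le _ hε).2 fun t => ?_
  by_cases ht : t ∈ U
  · simp [Clopens.charFn_of_mem ht, hε]
  · simpa [Clopens.charFn_of_notMem ht, abs_of_nonneg (show 0 ≤ b t from hb t)] using hbU t ht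

section BanachModule

variable {K X : Type*} [TopologicalSpace K] [NormedAddCommGroup X] [NormedSpace ℝ X]
    {m : C(K, ℝ) →ₐ[ℝ] (X →L[ℝ] X)} {x : X}

lemma map_charFn_sup_apply_eq_zero {W W' : Clopens K} (hW : m W.charFn x = 0)
    (hW' : m W'.charFn x = 0) : m (W ⊔ W').charFn x = 0 := by
  simp [Clopens.charFn_sup, hW, hW']

lemma map_charFn_apply_eq_zero_of_le {W : Clopens K} {a : C(K, ℝ)} {ε : ℝ} (hε : 0 < ε)
    (haW : ∀ t ∈ W, ε ≤ a t) (ha : m a x = 0) : m W.charFn x = 0 := by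
  obtain ⟨g, hg⟩ := exists_mul_eq_charFn hε haW
  simp [← hg, ha]

theorem BadeComplete.map_charFn_apply_eq_zero [CompactSpace K] [T2Space K] [CompleteSpace X]
    (hBade : BadeComplete m) {U : Clopens K}
    (hdense : (U : Set K) ⊆
      closure (⋃ (W : Clopens K) (_ : W ≤ U ∧ m W.charFn x = 0), (W : Set K))) :
    m U.charFn x = 0 := by
  set 𝒲 := {W : Clopens K | W ≤ U ∧ m W.charFn x = 0}
  have hbot : ⊥ ∈ 𝒲 := ⟨bot_le, by simp⟩
  have hdir : DirectedOn (· ≤ ·) (Clopens.charFn '' 𝒲) :=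
    (show SupClosed 𝒲 from fun W hW W' hW' =>
      ⟨sup_le hW.1 hW'.1, map_charFn_sup_apply_eq_zero hW.2 hW'.2⟩).directedOn.mono_comp
      fun _ _ h => Clopens.charFn_mono h
  have hlub : IsLUB (Clopens.charFn '' 𝒲) U.charFn := by
    refine ⟨?_, fun c hc t => ?_⟩
    · rintro _ ⟨W, hW, rfl⟩
      exact Clopens.charFn_mono hW.1
    by_cases ht : t ∈ U
    · have hclosure : closure (⋃ W ∈ 𝒲, (W : Set K)) ⊆ {s | 1 ≤ c s} :=
        closure_minimal (Set.iUnion₂_subset fun W hW s hs =>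
            Clopens.charFn_of_mem hs ▸ hc ⟨W, hW, rfl⟩ s)
          (isClosed_le continuous_const c.continuous)
      simpa [Clopens.charFn_of_mem ht] using hclosure (hdense ht)
    · simpa [Clopens.charFn_of_notMem ht] using hc ⟨⊥, hbot, rfl⟩ t
  have hne : (Clopens.charFn '' 𝒲).Nonempty := ⟨_, ⊥, hbot, rfl⟩
  have := hdir.isDirectedOrder
  have := hne.to_subtype
  refine tendsto_nhds_unique (hBade _ ?_ hne hdir _ U.isIdempotentElem_charFn hlub x) ?_
  · rintro _ ⟨W, -, rfl⟩
    exact W.isIdempotentElem_charFn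
  · refine tendsto_const_nhds.congr ?_
    rintro ⟨_, W, hW, rfl⟩
    exact hW.2.symm

theorem BadeComplete.norm_map_apply_le_of_isLUB [CompactSpace K] [T2Space K] [CompleteSpace X]
    [ExtremallyDisconnected K] (hBade : BadeComplete m) (hm : ∀ a, ‖m a‖ ≤ ‖a‖)
    {A : Set C(K, ℝ)} (hA0 : ∀ a ∈ A, 0 ≤ a) (hAne : A.Nonempty) {b : C(K, ℝ)}
    (hb : IsLUB A b) (hAx : ∀ a ∈ A, m a x = 0) {ε : ℝ} (hε : 0 < ε) :
    ‖m b x‖ ≤ ε * ‖x‖ := by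
  have hsuperlevel (a : C(K, ℝ)) : IsOpen {t | ε < a t} :=
    isOpen_lt continuous_const a.continuous
  set U := ExtremallyDisconnected.closureClopens (⋃ a ∈ A, {t | ε < a t})
    (isOpen_biUnion fun a _ => hsuperlevel a)
  have hUx : m U.charFn x = 0 := hBade.map_charFn_apply_eq_zero <| closure_mono <|
    Set.iUnion₂_subset fun a ha s hs => Set.mem_iUnion₂.2
      ⟨ExtremallyDisconnected.closureClopens _ (hsuperlevel a),
        ⟨closure_mono (Set.subset_biUnion_of_mem (u := fun a => {t | ε < a t}) ha),
          map_charFn_apply_eq_zero_of_le hε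
            (fun t ht => closure_lt_subset_le continuous_const a.continuous ht) (hAx a ha)⟩,
        subset_closure hs⟩
  have hbU : ∀ t ∉ U, b t ≤ ε := hb.apply_le_of_forall_notMem U fun a ha t ht =>
    not_lt.1 fun hlt => ht (subset_closure (Set.mem_biUnion ha hlt))
  obtain ⟨a₀, ha₀⟩ := hAne
  have hnorm : ‖b - b * U.charFn‖ ≤ ε :=
    norm_sub_mul_charFn_le ((hA0 a₀ ha₀).trans (hb.1 ha₀)) U hε.le hbU
  calc ‖m b x‖ = ‖m (b - b * U.charFn) x‖ := by simp [hUx]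
    _ ≤ ‖m (b - b * U.charFn)‖ * ‖x‖ := (m _).le_opNorm x
    _ ≤ ε * ‖x‖ := by gcongr; exact (hm _).trans hnorm

end BanachModule

/-- If `K` is Stonian and the idempotents of `C(K)` form a Bade-complete Boolean algebra
of projections on `X`, then `X` is a Kaplansky module. -/
theorem stmt12 {K X : Type*} [TopologicalSpace K] [CompactSpace K] [T2Space K]
    [ExtremallyDisconnected K]
    [NormedAddCommGroup X] [NormedSpace ℝ X] [CompleteSpace X]
    (m : C(K, ℝ) →ₐ[ℝ] (X →L[ℝ] X))
    (hm : ∀ a : C(K, ℝ), ‖m a‖ = ‖a‖)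
    (hBade : BadeComplete m) :
    IsKaplansky m := by
  intro x A hA0 hAne _ b hb hAx
  have hlim : Tendsto (fun ε : ℝ => ε * ‖x‖) (𝓝[>] 0) (𝓝 0) :=
    ((continuous_id.mul continuous_const).tendsto' 0 0 (zero_mul _)).mono_left
      nhdsWithin_le_nhds
  have hbx : ‖m b x‖ ≤ 0 := ge_of_tendsto hlim <| eventually_nhdsWithin_of_forall fun _ hε =>
    hBade.norm_map_apply_le_of_isLUB (fun a => (hm a).le) hA0 hAne hb hAx hε
  simpa using hbx
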